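/- Let u and v be two fixed real-valued attributes of the N population units, with Ū₁ the sample mean of u over the treatment group (a uniformly random subset of size n₁) and V̄₀ the sample mean of v over the complementary control group of size n₀ = N − n₁. Then the variance of the difference of sample means is Var(Ū₁ − V̄₀) = (1/(N−1)) · [ n₀ σ_u²/n₁ + n₁ σ_v²/n₀ + 2 σ_{u,v} ] = (1/(N−1)) · [ (n₀² σ_u² + n₁² σ_v² + 2 n₁ n₀ σ_{u,v}) / (n₁ n₀) ], where σ_u², σ_v² are the finite-population variances of u and v and σ_{u,v} their finite-population covariance. -/

import Mathlib

open Finset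

/-- Expectation of a statistic `f` of the treatment group, over the uniform
distribution on size-`n₁` subsets of the finite population `Fin N`
(i.e. complete randomization with `n₁` treated units). -/
noncomputable def expct (N n₁ : ℕ) (f : Finset (Fin N) → ℝ) : ℝ :=
  (∑ s ∈ Finset.powersetCard n₁ (Finset.univ : Finset (Fin N)), f s) /
    ((Finset.powersetCard n₁ (Finset.univ : Finset (Fin N))).card : ℝ)

/-- Variance of a statistic of the treatment group under complete randomization. -/
noncomputable def vr (N n₁ : ℕ) (f : Finset (Fin N) → ℝ) : ℝ :=
  expct N n₁ (fun s => (f s - expct N n₁ f) ^ 2)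

/-- Covariance of two statistics of the treatment group under complete randomization. -/
noncomputable def cv (N n₁ : ℕ) (f g : Finset (Fin N) → ℝ) : ℝ :=
  expct N n₁ (fun s => (f s - expct N n₁ f) * (g s - expct N n₁ g))

/-- Mean of the fixed attribute `u` over the group `s`. -/
noncomputable def groupMean {N : ℕ} (u : Fin N → ℝ) (s : Finset (Fin N)) : ℝ :=
  (∑ i ∈ s, u i) / (s.card : ℝ)

/-- Difference of means of attribute `u` between treatment group `s` and its
complement (the control group). -/
noncomputable def delta {N : ℕ} (u : Fin N → ℝ) (s : Finset (Fin N)) : ℝ :=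
  groupMean u s - groupMean u sᶜ

/-- Finite-population mean. -/
noncomputable def popMean {N : ℕ} (u : Fin N → ℝ) : ℝ := (∑ i, u i) / (N : ℝ)

/-- Finite-population variance σ_u² = (1/N) Σᵢ (uᵢ − ū)². -/
noncomputable def popVar {N : ℕ} (u : Fin N → ℝ) : ℝ :=
  (∑ i, (u i - popMean u) ^ 2) / (N : ℝ)

/-- Finite-population covariance σ_{u,v} = (1/N) Σᵢ (uᵢ − ū)(vᵢ − v̄). -/
noncomputable def popCov {N : ℕ} (u v : Fin N → ℝ) : ℝ :=
  (∑ i, (u i - popMean u) * (v i - popMean v)) / (N : ℝ)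

/-!
For `#s = n₁` the statistic equals `∑ i ∈ s, w i + (ū - v̄)` with
`w i = (u i - ū) / n₁ + (v i - v̄) / n₀`, a centred vector. For centred `w`,
`(∑ i ∈ s, w i)² = -∑ i ∈ s, ∑ j ∉ s, w i * w j`, and each ordered pair `i ≠ j` is split by
exactly `C(N - 2, n₁ - 1)` of the `C(N, n₁)` samples, so the sample sum of `w` has mean `0` and
variance `n₁ n₀ / (N (N - 1)) · ∑ i, w i ²`. Expanding `∑ i, w i ²` in terms of `σ_u²`, `σ_v²`
and `σ_{u,v}` gives the formula.
-/

section Combinatorics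

variable {α M : Type*} [Fintype α] [DecidableEq α]

lemma card_filter_mem_powersetCard_univ (k : ℕ) (i : α) :
    #{s ∈ powersetCard (k + 1) (univ : Finset α) | i ∈ s} = (Fintype.card α - 1).choose k := by
  simpa using card_filter_powersetCard_subset {i} univ (k + 1) (subset_univ _) (by simp)

lemma card_filter_mem_notMem_powersetCard_univ (k : ℕ) {i j : α} (hij : i ≠ j) :
    #{s ∈ powersetCard (k + 1) (univ : Finset α) | i ∈ s ∧ j ∉ s} =
      (Fintype.card α - 2).choose k := by
  have hsub : {i} ⊆ univ.erase j := by simpa using hij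
  have key : {s ∈ powersetCard (k + 1) (univ : Finset α) | i ∈ s ∧ j ∉ s} =
      {s ∈ powersetCard (k + 1) (univ.erase j) | {i} ⊆ s} := by
    ext s
    simp [subset_erase, and_comm, and_assoc]
  rw [key, card_filter_powersetCard_subset _ _ _ hsub (by simp)]
  simp [card_erase_of_mem, Nat.sub_sub]

variable [AddCommMonoid M]

lemma sum_powersetCard_sum (k : ℕ) (f : α → M) :
    ∑ s ∈ powersetCard (k + 1) (univ : Finset α), ∑ i ∈ s, f i =
      (Fintype.card α - 1).choose k • ∑ i, f i := by
  rw [sum_comm' (t' := univ) (s' := fun i => {s ∈ powersetCard (k + 1) univ | i ∈ s})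
    (by simp), smul_sum]
  simp_rw [sum_const, card_filter_mem_powersetCard_univ]

lemma sum_powersetCard_sum_sum_compl (k : ℕ) (f : α → α → M) :
    ∑ s ∈ powersetCard (k + 1) (univ : Finset α), ∑ i ∈ s, ∑ j ∈ sᶜ, f i j =
      (Fintype.card α - 2).choose k • ∑ i, ∑ j ∈ univ.erase i, f i j := by
  rw [sum_comm' (t' := univ) (s' := fun i => {s ∈ powersetCard (k + 1) univ | i ∈ s})
    (by simp), smul_sum]
  refine sum_congr rfl fun i _ => ?_
  rw [sum_comm' (t' := univ.erase i)
    (s' := fun j => {s ∈ powersetCard (k + 1) univ | i ∈ s ∧ j ∉ s}), smul_sum]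
  · refine sum_congr rfl fun j hj => ?_
    rw [sum_const, card_filter_mem_notMem_powersetCard_univ k (ne_of_mem_erase hj).symm]
  · intro s j
    simp only [mem_filter, mem_compl, mem_erase, mem_univ, and_true]
    grind

lemma sum_powersetCard_sq_sum_of_sum_eq_zero {R : Type*} [CommRing R] (k : ℕ) {w : α → R}
    (hw : ∑ i, w i = 0) :
    ∑ s ∈ powersetCard (k + 1) (univ : Finset α), (∑ i ∈ s, w i) ^ 2 =
      (Fintype.card α - 2).choose k * ∑ i, w i ^ 2 := by
  have hsq : ∀ s : Finset α, (∑ i ∈ s, w i) ^ 2 = -∑ i ∈ s, ∑ j ∈ sᶜ, w i * w j := by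
    intro s
    have hcompl : ∑ j ∈ sᶜ, w j = -∑ i ∈ s, w i := by
      rw [eq_neg_iff_add_eq_zero, add_comm, sum_add_sum_compl, hw]
    rw [← sum_mul_sum, hcompl, mul_neg, sq, neg_neg]
  have hoff : ∀ i, ∑ j ∈ univ.erase i, w i * w j = -w i ^ 2 := by
    intro i
    rw [← mul_sum, sum_erase_eq_sub (mem_univ i), hw]
    ring
  simp_rw [hsq, sum_neg_distrib, sum_powersetCard_sum_sum_compl, hoff, sum_neg_distrib,
    nsmul_eq_mul]
  ring

lemma add_two_mul_add_one_mul_choose (n k : ℕ) :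
    (n + 2) * (n + 1) * n.choose k = (k + 1) * (n + 1 - k) * (n + 2).choose (k + 1) := by
  have h1 := Nat.add_one_mul_choose_eq (n + 1) k
  have h2 := Nat.choose_mul_succ_eq n k
  calc (n + 2) * (n + 1) * n.choose k = (n + 2) * ((n + 1).choose k * (n + 1 - k)) := by
        rw [← h2]; ring
    _ = _ := by rw [← mul_assoc, h1]; ring

end Combinatorics

section Sampling

variable {N n : ℕ}

lemma expct_congr {f g : Finset (Fin N) → ℝ} (h : ∀ s ∈ powersetCard n univ, f s = g s) :
    expct N n f = expct N n g := by
  rw [expct, expct, sum_congr rfl h]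

lemma vr_congr {f g : Finset (Fin N) → ℝ} (h : ∀ s ∈ powersetCard n univ, f s = g s) :
    vr N n f = vr N n g := by
  rw [vr, vr, expct_congr h]
  exact expct_congr fun s hs => by rw [h s hs]

lemma expct_sum_add_const (hn : 0 < n) (hnN : n ≤ N) {w : Fin N → ℝ} (hw : ∑ i, w i = 0)
    (c : ℝ) : expct N n (fun s => ∑ i ∈ s, w i + c) = c := by
  obtain ⟨k, rfl⟩ : ∃ k, n = k + 1 := ⟨n - 1, by omega⟩
  have hcard : (#(powersetCard (k + 1) (univ : Finset (Fin N))) : ℝ) ≠ 0 := by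
    simpa [card_powersetCard] using (Nat.choose_pos hnN).ne'
  rw [expct, sum_add_distrib, sum_powersetCard_sum, hw, smul_zero, sum_const,
    nsmul_eq_mul, zero_add, mul_div_cancel_left₀ _ hcard]

lemma vr_sum_add_const (hn : 0 < n) (hnN : n < N) {w : Fin N → ℝ} (hw : ∑ i, w i = 0)
    (c : ℝ) :
    vr N n (fun s => ∑ i ∈ s, w i + c) =
      n * (N - n) / (N * (N - 1)) * ∑ i, w i ^ 2 := by
  rw [vr, expct_sum_add_const hn hnN.le hw]
  simp only [add_sub_cancel_right]
  obtain ⟨k, rfl⟩ : ∃ k, n = k + 1 := ⟨n - 1, by omega⟩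
  obtain ⟨m, rfl⟩ : ∃ m, N = m + 2 := ⟨N - 2, by omega⟩
  rw [expct, sum_powersetCard_sq_sum_of_sum_eq_zero k hw, card_powersetCard, card_univ,
    Fintype.card_fin]
  have hchoose : ((m + 2).choose (k + 1) : ℝ) ≠ 0 := by
    exact_mod_cast (Nat.choose_pos (by omega)).ne'
  have hratio := congrArg (Nat.cast (R := ℝ)) (add_two_mul_add_one_mul_choose m k)
  push_cast [Nat.cast_sub (show k ≤ m + 1 by omega)] at hratio
  push_cast
  rw [show (m : ℝ) + 2 - 1 = m + 1 by ring]
  field_simp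
  linear_combination (∑ i, w i ^ 2) * hratio

end Sampling

section Population

variable {N : ℕ} (u v : Fin N → ℝ)

lemma sum_sub_popMean : ∑ i, (u i - popMean u) = 0 := by
  rcases eq_or_ne N 0 with rfl | hN
  · simp
  · rw [sum_sub_distrib, sum_const, card_univ, Fintype.card_fin, nsmul_eq_mul, popMean,
      mul_div_cancel₀ _ (Nat.cast_ne_zero.mpr hN), sub_self]

lemma groupMean_eq_add_popMean {s : Finset (Fin N)} (hs : s.Nonempty) :
    groupMean u s = (#s : ℝ)⁻¹ * ∑ i ∈ s, (u i - popMean u) + popMean u := by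
  have hcard : (#s : ℝ) ≠ 0 := Nat.cast_ne_zero.mpr hs.card_ne_zero
  rw [groupMean, sum_sub_distrib, sum_const, nsmul_eq_mul]
  field_simp
  ring

lemma groupMean_compl_eq_popMean_sub {s : Finset (Fin N)} (hs : sᶜ.Nonempty) :
    groupMean v sᶜ = popMean v - (#sᶜ : ℝ)⁻¹ * ∑ i ∈ s, (v i - popMean v) := by
  have hcompl : ∑ i ∈ sᶜ, (v i - popMean v) = -∑ i ∈ s, (v i - popMean v) := by
    rw [eq_neg_iff_add_eq_zero, add_comm, sum_add_sum_compl, sum_sub_popMean]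
  rw [groupMean_eq_add_popMean v hs, hcompl]
  ring

lemma sum_sq_mul_sub_popMean_add (a b : ℝ) :
    ∑ i, (a * (u i - popMean u) + b * (v i - popMean v)) ^ 2 =
      N * (a ^ 2 * popVar u + b ^ 2 * popVar v + 2 * a * b * popCov u v) := by
  rcases eq_or_ne N 0 with rfl | hN
  · simp
  have hN' : (N : ℝ) ≠ 0 := Nat.cast_ne_zero.mpr hN
  have hexpand : ∀ x y : ℝ,
      (a * x + b * y) ^ 2 = a ^ 2 * x ^ 2 + b ^ 2 * y ^ 2 + 2 * a * b * (x * y) :=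
    fun x y => by ring
  simp only [hexpand, sum_add_distrib, ← mul_sum, popVar, popCov]
  field_simp

end Population

/-- **Variance of the difference of sample means across groups.**
Var(Ū₁ − V̄₀) = (1/(N−1)) [ n₀σ_u²/n₁ + n₁σ_v²/n₀ + 2σ_{u,v} ]
            = (1/(N−1)) [ (n₀²σ_u² + n₁²σ_v² + 2n₁n₀σ_{u,v}) / (n₁n₀) ]. -/
theorem variance_difference_sample_means
    {N n₀ n₁ : ℕ} (h₁ : 0 < n₁) (h₀ : 0 < n₀) (hN : n₀ + n₁ = N)
    (u v : Fin N → ℝ) :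
    vr N n₁ (fun s => groupMean u s - groupMean v sᶜ) =
      (1 / ((N : ℝ) - 1)) *
        ((n₀ : ℝ) * popVar u / (n₁ : ℝ) + (n₁ : ℝ) * popVar v / (n₀ : ℝ) +
          2 * popCov u v) ∧
    vr N n₁ (fun s => groupMean u s - groupMean v sᶜ) =
      (1 / ((N : ℝ) - 1)) *
        (((n₀ : ℝ) ^ 2 * popVar u + (n₁ : ℝ) ^ 2 * popVar v +
            2 * (n₁ : ℝ) * (n₀ : ℝ) * popCov u v) / ((n₁ : ℝ) * (n₀ : ℝ))) := by
  subst hN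
  set w : Fin (n₀ + n₁) → ℝ := fun i =>
    (n₁ : ℝ)⁻¹ * (u i - popMean u) + (n₀ : ℝ)⁻¹ * (v i - popMean v)
  have hw : ∑ i, w i = 0 := by
    simp only [w, sum_add_distrib, ← mul_sum, sum_sub_popMean, mul_zero, add_zero]
  have hdiff : ∀ s ∈ powersetCard n₁ univ,
      groupMean u s - groupMean v sᶜ = ∑ i ∈ s, w i + (popMean u - popMean v) := by
    intro s hsP
    have hs : #s = n₁ := mem_powersetCard_univ.mp hsP
    have hsc : #sᶜ = n₀ := by rw [card_compl, Fintype.card_fin, hs]; omega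
    rw [groupMean_eq_add_popMean u (card_pos.mp (by omega)),
      groupMean_compl_eq_popMean_sub v (card_pos.mp (by omega)), hs, hsc]
    simp only [w, sum_add_distrib, mul_sum]
    ring
  have hvar := vr_sum_add_const h₁ (by omega) hw (popMean u - popMean v)
  rw [← vr_congr hdiff, sum_sq_mul_sub_popMean_add] at hvar
  have hn₁ : (n₁ : ℝ) ≠ 0 := by positivity
  have hn₀ : (n₀ : ℝ) ≠ 0 := by positivity
  refine ⟨?_, ?_⟩ <;> rw [hvar] <;> push_cast <;> field_simp <;> ring
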